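/- (Neyman–Pearson optimality) Let P, Q be probability distributions on a countable set. Among all (possibly randomized) tests Γ : X → [0,1], the test minimizing max{ E_{x∼P}[Γ(x)], E_{x∼Q}[1−Γ(x)] } can be taken to be a likelihood-ratio threshold test: there exist γ ∈ ℝ and λ ∈ [0,1] such that the test outputting 1 when Q(x)/P(x) > e^γ, 0 when Q(x)/P(x) < e^γ, and 1 with probability λ at equality, achieves the minimum. -/
import Mathlib

open Real

section NPaux
variable {X : Type*}

private lemma np_summable_ite {P : X → ℝ} (hP : Summable P) (h0 : ∀ x, 0 ≤ P x)
    (p : X → Prop) [DecidablePred p] : Summable (fun x => if p x then P x else 0) :=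
  hP.of_nonneg_of_le (fun x => by by_cases h : p x <;> simp [h, h0 x])
    (fun x => by by_cases h : p x <;> simp [h, h0 x])

private lemma np_ite_nonneg {P : X → ℝ} (h0 : ∀ x, 0 ≤ P x) (p : X → Prop)
    [DecidablePred p] (x : X) : 0 ≤ if p x then P x else 0 := by
  by_cases h : p x <;> simp [h, h0 x]

private lemma np_ite_le {P : X → ℝ} (h0 : ∀ x, 0 ≤ P x) (p : X → Prop)
    [DecidablePred p] (x : X) : (if p x then P x else 0) ≤ P x := by
  by_cases h : p x <;> simp [h, h0 x]

private lemma np_tail {P b : X → ℝ} (hPs : Summable P) (hP1 : (∑' x, P x) = 1)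
    (hb0 : ∀ x, 0 ≤ b x) (hbP : ∀ x, b x ≤ P x) {G : Finset X} {ε : ℝ}
    (hG : 1 - ε < ∑ x ∈ G, P x) : (∑' x, b x) ≤ (∑ x ∈ G, b x) + ε := by
  have hbs : Summable b := hPs.of_nonneg_of_le hb0 hbP
  have h1 : ∑ x ∈ G, b x + ∑' x : {x // x ∉ G}, b x = ∑' x, b x :=
    Summable.sum_add_tsum_compl hbs
  have h2 : ∑ x ∈ G, P x + ∑' x : {x // x ∉ G}, P x = ∑' x, P x :=
    Summable.sum_add_tsum_compl hPs
  have h3 : (∑' x : {x // x ∉ G}, b x) ≤ ∑' x : {x // x ∉ G}, P x :=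
    Summable.tsum_le_tsum (fun x => hbP x) (hbs.subtype _) (hPs.subtype _)
  have h4 : (∑' x : {x // x ∉ G}, P x) < ε := by
    rw [hP1] at h2; linarith
  linarith

private noncomputable def npA (P Q : X → ℝ) (t : ℝ) : ℝ :=
  ∑' x, if t * P x < Q x then P x else 0
private noncomputable def npB (P Q : X → ℝ) (t : ℝ) : ℝ :=
  ∑' x, if t * P x ≤ Q x then P x else 0
private noncomputable def npC (P Q : X → ℝ) (t : ℝ) : ℝ :=
  ∑' x, if Q x < t * P x then Q x else 0
private noncomputable def npD (P Q : X → ℝ) (t : ℝ) : ℝ :=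
  ∑' x, if Q x ≤ t * P x then Q x else 0

variable (P Q : X → ℝ)

/-- crossing monotonicity: for `s < t`, `npB t ≤ npA s`. -/
private lemma np_cross1 (hP0 : ∀ x, 0 ≤ P x) (hQ0 : ∀ x, 0 ≤ Q x)
    (hPs : Summable P) {s t : ℝ} (hst : s < t) : npB P Q t ≤ npA P Q s := by
  refine Summable.tsum_le_tsum (fun x => ?_) (np_summable_ite hPs hP0 _) (np_summable_ite hPs hP0 _)
  by_cases h : t * P x ≤ Q x
  · simp only [h, if_pos]
    rcases (hP0 x).lt_or_eq with hp | hp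
    · have : s * P x < Q x := lt_of_lt_of_le (by nlinarith) h
      simp [this]
    · by_cases h2 : s * P x < Q x <;> simp [h2, ← hp]
  · simp only [h, if_neg, if_false]
    exact np_ite_nonneg hP0 (fun x => s * P x < Q x) x

/-- crossing monotonicity: for `s < t`, `npD s ≤ npC t`. -/
private lemma np_cross2 (hP0 : ∀ x, 0 ≤ P x) (hQ0 : ∀ x, 0 ≤ Q x)
    (hQs : Summable Q) {s t : ℝ} (hst : s < t) : npD P Q s ≤ npC P Q t := by
  refine Summable.tsum_le_tsum (fun x => ?_) (np_summable_ite hQs hQ0 _) (np_summable_ite hQs hQ0 _)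
  by_cases h : Q x ≤ s * P x
  · simp only [h, if_pos]
    rcases (hP0 x).lt_or_eq with hp | hp
    · have : Q x < t * P x := lt_of_le_of_lt h (by nlinarith)
      simp [this]
    · have hq : Q x = 0 := le_antisymm (by rw [← hp] at h; linarith [h]) (hQ0 x)
      rw [hq]; simp
  · simp only [h, if_neg, if_false]
    exact np_ite_nonneg hQ0 (fun x => Q x < t * P x) x

end NPaux

section NPmain
variable {X : Type*} (P Q : X → ℝ)

private lemma np_exists (hP0 : ∀ x, 0 ≤ P x) (hQ0 : ∀ x, 0 ≤ Q x)
    (hPs : Summable P) (hQs : Summable Q)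
    (hP1 : (∑' x, P x) = 1) (hQ1 : (∑' x, Q x) = 1) :
    ∃ t : ℝ, 0 < t ∧ npA P Q t ≤ npD P Q t ∧ npC P Q t ≤ npB P Q t := by
  classical
  have sA : ∀ t, Summable (fun x => if t * P x < Q x then P x else 0) :=
    fun t => np_summable_ite hPs hP0 _
  have sB : ∀ t, Summable (fun x => if t * P x ≤ Q x then P x else 0) :=
    fun t => np_summable_ite hPs hP0 _
  have sC : ∀ t, Summable (fun x => if Q x < t * P x then Q x else 0) :=
    fun t => np_summable_ite hQs hQ0 _
  have sD : ∀ t, Summable (fun x => if Q x ≤ t * P x then Q x else 0) :=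
    fun t => np_summable_ite hQs hQ0 _
  -- basic bounds
  have hC_le : ∀ t : ℝ, 0 ≤ t → npC P Q t ≤ t := by
    intro t ht
    have : npC P Q t ≤ ∑' x, t * P x := by
      refine Summable.tsum_le_tsum (fun x => ?_) (sC t) (hPs.mul_left t)
      by_cases h : Q x < t * P x
      · simp only [h, if_pos]; linarith
      · simp only [h, if_neg, if_false]; exact mul_nonneg ht (hP0 x)
    rwa [tsum_mul_left, hP1, mul_one] at this
  have hA_le : ∀ t : ℝ, 0 < t → npA P Q t ≤ 1 / t := by
    intro t ht
    have : npA P Q t ≤ ∑' x, (1 / t) * Q x := by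
      refine Summable.tsum_le_tsum (fun x => ?_) (sA t) (hQs.mul_left _)
      by_cases h : t * P x < Q x
      · simp only [h, if_pos]
        rw [div_mul_eq_mul_div, one_mul, le_div_iff₀ ht]; nlinarith
      · simp only [h, if_neg, if_false]; exact mul_nonneg (by positivity) (hQ0 x)
      
    rwa [tsum_mul_left, hQ1, mul_one] at this
  by_cases hdisj : ∀ x, P x = 0 ∨ Q x = 0
  · -- disjoint supports: t = 1 works
    refine ⟨1, one_pos, ?_, ?_⟩
    · have hA0 : npA P Q 1 = 0 := by
        have hfun : (fun x => if 1 * P x < Q x then P x else 0) = (fun _ => (0:ℝ)) := by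
          funext x
          by_cases h2 : 1 * P x < Q x
          · rw [if_pos h2]
            rcases hdisj x with h | h
            · exact h
            · exfalso; rw [h] at h2; nlinarith [hP0 x]
          · rw [if_neg h2]
        unfold npA
        rw [hfun, tsum_zero]
      rw [hA0]
      exact tsum_nonneg (np_ite_nonneg hQ0 (fun x => Q x ≤ 1 * P x))
    · have hC0 : npC P Q 1 = 0 := by
        have hfun : (fun x => if Q x < 1 * P x then Q x else 0) = (fun _ => (0:ℝ)) := by
          funext x
          by_cases h2 : Q x < 1 * P x
          · rw [if_pos h2]
            rcases hdisj x with h | h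
            · exfalso; rw [h] at h2; nlinarith [hQ0 x]
            · exact h
          · rw [if_neg h2]
        unfold npC
        rw [hfun, tsum_zero]
      rw [hC0]
      exact tsum_nonneg (np_ite_nonneg hP0 (fun x => 1 * P x ≤ Q x))
  · push_neg at hdisj
    obtain ⟨x₀, hp0, hq0⟩ := hdisj
    have hp0' : 0 < P x₀ := (hP0 x₀).lt_of_ne (Ne.symm hp0)
    have hq0' : 0 < Q x₀ := (hQ0 x₀).lt_of_ne (Ne.symm hq0)
    set S : Set ℝ := {t : ℝ | 0 < t ∧ npC P Q t ≤ npB P Q t} with hS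
    set r : ℝ := Q x₀ / P x₀ with hr
    have hrpos : 0 < r := div_pos hq0' hp0'
    -- S is nonempty
    have ht₁ : min r (P x₀ / 2) ∈ S := by
      set t₁ := min r (P x₀ / 2) with ht1def
      have ht₁pos : 0 < t₁ := lt_min hrpos (by linarith)
      constructor
      · exact ht₁pos
      · have h1 : npC P Q t₁ ≤ t₁ := hC_le t₁ ht₁pos.le
        have h2 : P x₀ ≤ npB P Q t₁ := by
          have hcond : t₁ * P x₀ ≤ Q x₀ := by
            have : t₁ ≤ r := min_le_left _ _
            rw [hr] at this
            calc t₁ * P x₀ ≤ (Q x₀ / P x₀) * P x₀ := by nlinarith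
            _ = Q x₀ := by field_simp
          have h5 := Summable.le_tsum (sB t₁) x₀ (fun y _ => np_ite_nonneg hP0 (fun x => t₁ * P x ≤ Q x) y)
          rw [if_pos hcond] at h5
          exact h5
        have h3 : t₁ ≤ P x₀ / 2 := min_le_right _ _
        linarith
    have hSne : S.Nonempty := ⟨_, ht₁⟩
    -- S is bounded above
    set s₀ : ℝ := max r (2 / Q x₀) with hs0
    have hs₀pos : 0 < s₀ := lt_of_lt_of_le hrpos (le_max_left _ _)
    have hSbdd : BddAbove S := by
      refine ⟨s₀, fun t ht => ?_⟩
      by_contra hlt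
      push_neg at hlt
      have h1 : npB P Q t ≤ npA P Q s₀ := np_cross1 P Q hP0 hQ0 hPs hlt
      have h2 : npD P Q s₀ ≤ npC P Q t := np_cross2 P Q hP0 hQ0 hQs hlt
      have h3 : npA P Q s₀ ≤ 1 / s₀ := hA_le s₀ hs₀pos
      have h4 : 1 / s₀ ≤ Q x₀ / 2 := by
        rw [div_le_div_iff₀ hs₀pos (by norm_num)]
        have : 2 / Q x₀ ≤ s₀ := le_max_right _ _
        calc (1:ℝ) * 2 = 2 := by ring
        _ = (2 / Q x₀) * Q x₀ := by field_simp
        _ ≤ Q x₀ * s₀ := by nlinarith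
      have h5 : Q x₀ ≤ npD P Q s₀ := by
        have hcond : Q x₀ ≤ s₀ * P x₀ := by
          have : r ≤ s₀ := le_max_left _ _
          rw [hr] at this
          calc Q x₀ = (Q x₀ / P x₀) * P x₀ := by field_simp
          _ ≤ s₀ * P x₀ := by nlinarith
        have h6 := Summable.le_tsum (sD s₀) x₀ (fun y _ => np_ite_nonneg hQ0 (fun x => Q x ≤ s₀ * P x) y)
        rw [if_pos hcond] at h6
        exact h6
      have := ht.2
      linarith
    set T := sSup S with hT
    have hTpos : 0 < T := lt_of_lt_of_le ht₁.1 (le_csSup hSbdd ht₁)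
    refine ⟨T, hTpos, ?_, ?_⟩
    · -- E4 : npA T ≤ npD T
      refine le_of_forall_pos_le_add (fun ε hε => ?_)
      obtain ⟨G, hG⟩ : ∃ G : Finset X, 1 - ε/2 < ∑ x ∈ G, P x := by
        have h : HasSum P 1 := hP1 ▸ hPs.hasSum
        rw [HasSum] at h
        exact (h.eventually (eventually_gt_nhds (by linarith : (1:ℝ) - ε/2 < 1))).exists
      obtain ⟨F, hF⟩ : ∃ F : Finset X, 1 - ε/2 < ∑ x ∈ F, Q x := by
        have h : HasSum Q 1 := hQ1 ▸ hQs.hasSum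
        rw [HasSum] at h
        exact (h.eventually (eventually_gt_nhds (by linarith : (1:ℝ) - ε/2 < 1))).exists
      set H : Finset ℝ :=
        ((F ∪ G).filter (fun x => 0 < P x ∧ T * P x < Q x)).image (fun x => Q x / P x) with hH
      set u : ℝ := (insert (T+1) H).min' (Finset.insert_nonempty _ _) with hu
      have huT : T < u := by
        rw [hu, Finset.lt_min'_iff]
        intro y hy
        rcases Finset.mem_insert.1 hy with h | h
        · rw [h]; linarith
        · obtain ⟨x, hx, hxy⟩ := Finset.mem_image.1 h
          obtain ⟨-, hp, hq⟩ := Finset.mem_filter.1 hx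
          rw [← hxy, lt_div_iff₀ hp]
          linarith [hq]
      have hu_le : ∀ x, x ∈ F ∪ G → 0 < P x → T * P x < Q x → u ≤ Q x / P x := by
        intro x hx hp hq
        refine Finset.min'_le _ _ ?_
        exact Finset.mem_insert_of_mem (Finset.mem_image.2
          ⟨x, Finset.mem_filter.2 ⟨hx, hp, hq⟩, rfl⟩)
      have huS : npB P Q u ≤ npC P Q u := by
        have hnot : u ∉ S := fun hmem => absurd (le_csSup hSbdd hmem) (not_le.2 huT)
        have : ¬ (0 < u ∧ npC P Q u ≤ npB P Q u) := hnot
        push_neg at this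
        exact le_of_lt (this (lt_trans hTpos huT))
      have step1 : npA P Q T ≤ (∑ x ∈ G, if T * P x < Q x then P x else 0) + ε/2 :=
        np_tail hPs hP1 (np_ite_nonneg hP0 (fun x => T * P x < Q x))
          (np_ite_le hP0 (fun x => T * P x < Q x)) hG
      have step2 : (∑ x ∈ G, if T * P x < Q x then P x else 0) ≤
          ∑ x ∈ G, (if u * P x ≤ Q x then P x else 0) := by
        refine Finset.sum_le_sum (fun x hx => ?_)
        by_cases h : T * P x < Q x
        · rw [if_pos h]
          by_cases hp : 0 < P x
          · have hr := hu_le x (Finset.mem_union_right F hx) hp h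
            rw [le_div_iff₀ hp] at hr
            rw [if_pos hr]
          · have hp0 : P x = 0 := le_antisymm (not_lt.1 hp) (hP0 x)
            rw [if_pos (by rw [hp0]; simpa using hQ0 x)]
        · rw [if_neg h]
          exact np_ite_nonneg hP0 (fun x => u * P x ≤ Q x) x
      have step3 : (∑ x ∈ G, if u * P x ≤ Q x then P x else 0) ≤ npB P Q u :=
        Summable.sum_le_tsum G (fun i _ => np_ite_nonneg hP0 (fun x => u * P x ≤ Q x) i) (sB u)
      have step5 : npC P Q u ≤ (∑ x ∈ F, if Q x < u * P x then Q x else 0) + ε/2 :=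
        np_tail hQs hQ1 (np_ite_nonneg hQ0 (fun x => Q x < u * P x))
          (np_ite_le hQ0 (fun x => Q x < u * P x)) hF
      have step6 : (∑ x ∈ F, if Q x < u * P x then Q x else 0) ≤
          ∑ x ∈ F, (if Q x ≤ T * P x then Q x else 0) := by
        refine Finset.sum_le_sum (fun x hx => ?_)
        by_cases h : Q x < u * P x
        · rw [if_pos h]
          have hp : 0 < P x := by
            rcases (hP0 x).lt_or_eq with h' | h'
            · exact h'
            · exfalso; rw [← h'] at h; nlinarith [hQ0 x]
          have hle : Q x ≤ T * P x := by
            by_contra hcon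
            push_neg at hcon
            have hr := hu_le x (Finset.mem_union_left G hx) hp hcon
            rw [le_div_iff₀ hp] at hr
            linarith
          rw [if_pos hle]
        · rw [if_neg h]
          exact np_ite_nonneg hQ0 (fun x => Q x ≤ T * P x) x
      have step7 : (∑ x ∈ F, if Q x ≤ T * P x then Q x else 0) ≤ npD P Q T :=
        Summable.sum_le_tsum F (fun i _ => np_ite_nonneg hQ0 (fun x => Q x ≤ T * P x) i) (sD T)
      linarith
    · -- E3 : npC T ≤ npB T
      refine le_of_forall_pos_le_add (fun ε hε => ?_)
      obtain ⟨F, hF⟩ : ∃ F : Finset X,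
          npC P Q T - ε/2 < ∑ x ∈ F, (if Q x < T * P x then Q x else 0) := by
        have h : HasSum (fun x => if Q x < T * P x then Q x else 0) (npC P Q T) := (sC T).hasSum
        rw [HasSum] at h
        exact (h.eventually (eventually_gt_nhds
          (by linarith : npC P Q T - ε/2 < npC P Q T))).exists
      obtain ⟨G, hG⟩ : ∃ G : Finset X, 1 - ε/2 < ∑ x ∈ G, P x := by
        have h : HasSum P 1 := hP1 ▸ hPs.hasSum
        rw [HasSum] at h
        exact (h.eventually (eventually_gt_nhds (by linarith : (1:ℝ) - ε/2 < 1))).exists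
      set H : Finset ℝ :=
        ((F ∪ G).filter (fun x => 0 < P x ∧ Q x < T * P x)).image (fun x => Q x / P x) with hH
      set s : ℝ := (insert (T/2) H).max' (Finset.insert_nonempty _ _) with hs
      have hsT : s < T := by
        rw [hs, Finset.max'_lt_iff]
        intro y hy
        rcases Finset.mem_insert.1 hy with h | h
        · rw [h]; linarith
        · obtain ⟨x, hx, hxy⟩ := Finset.mem_image.1 h
          obtain ⟨-, hp, hq⟩ := Finset.mem_filter.1 hx
          rw [← hxy, div_lt_iff₀ hp]
          linarith [hq]
      have hs_ge : ∀ x, x ∈ F ∪ G → 0 < P x → Q x < T * P x → Q x / P x ≤ s := by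
        intro x hx hp hq
        refine Finset.le_max' _ _ ?_
        exact Finset.mem_insert_of_mem (Finset.mem_image.2
          ⟨x, Finset.mem_filter.2 ⟨hx, hp, hq⟩, rfl⟩)
      obtain ⟨t'', ht''S, hst''⟩ := exists_lt_of_lt_csSup hSne (lt_of_lt_of_le hsT (le_of_eq hT))
      have ht''2 : npC P Q t'' ≤ npB P Q t'' := ht''S.2
      have step2 : (∑ x ∈ F, if Q x < T * P x then Q x else 0) ≤
          ∑ x ∈ F, (if Q x < t'' * P x then Q x else 0) := by
        refine Finset.sum_le_sum (fun x hx => ?_)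
        by_cases h : Q x < T * P x
        · rw [if_pos h]
          have hp : 0 < P x := by
            rcases (hP0 x).lt_or_eq with h' | h'
            · exact h'
            · exfalso; rw [← h'] at h; nlinarith [hQ0 x]
          have hr := hs_ge x (Finset.mem_union_left G hx) hp h
          rw [div_le_iff₀ hp] at hr
          rw [if_pos (by nlinarith : Q x < t'' * P x)]
        · rw [if_neg h]
          exact np_ite_nonneg hQ0 (fun x => Q x < t'' * P x) x
      have step3 : (∑ x ∈ F, if Q x < t'' * P x then Q x else 0) ≤ npC P Q t'' :=
        Summable.sum_le_tsum F (fun i _ => np_ite_nonneg hQ0 (fun x => Q x < t'' * P x) i) (sC t'')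
      have step5 : npB P Q t'' ≤ (∑ x ∈ G, if t'' * P x ≤ Q x then P x else 0) + ε/2 :=
        np_tail hPs hP1 (np_ite_nonneg hP0 (fun x => t'' * P x ≤ Q x))
          (np_ite_le hP0 (fun x => t'' * P x ≤ Q x)) hG
      have step6 : (∑ x ∈ G, if t'' * P x ≤ Q x then P x else 0) ≤
          ∑ x ∈ G, (if T * P x ≤ Q x then P x else 0) := by
        refine Finset.sum_le_sum (fun x hx => ?_)
        by_cases hp : 0 < P x
        · by_cases h : t'' * P x ≤ Q x
          · rw [if_pos h]
            have hle : T * P x ≤ Q x := by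
              by_contra hcon
              push_neg at hcon
              have hr := hs_ge x (Finset.mem_union_right F hx) hp hcon
              rw [div_le_iff₀ hp] at hr
              nlinarith
            rw [if_pos hle]
          · rw [if_neg h]
            exact np_ite_nonneg hP0 (fun x => T * P x ≤ Q x) x
        · have hp0 : P x = 0 := le_antisymm (not_lt.1 hp) (hP0 x)
          rw [if_pos (by rw [hp0]; simpa using hQ0 x),
            if_pos (by rw [hp0]; simpa using hQ0 x)]
      have step7 : (∑ x ∈ G, if T * P x ≤ Q x then P x else 0) ≤ npB P Q T :=
        Summable.sum_le_tsum G (fun i _ => np_ite_nonneg hP0 (fun x => T * P x ≤ Q x) i) (sB T)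
      linarith

end NPmain

/-- Neyman–Pearson optimality: among all randomized tests `Γ : X → [0,1]`, the minimal
worst-case error `max{E_P[Γ], E_Q[1−Γ]}` is achieved by a likelihood-ratio threshold
test with some threshold `e^γ` and tie-breaking probability `λ`. -/
theorem neyman_pearson_optimal {X : Type*} [Countable X]
    (P Q : X → ℝ) (hP_nonneg : ∀ x, 0 ≤ P x) (hQ_nonneg : ∀ x, 0 ≤ Q x)
    (hP_sum : Summable P) (hQ_sum : Summable Q)
    (hP_one : (∑' x, P x) = 1) (hQ_one : (∑' x, Q x) = 1) :
    ∃ γ lam : ℝ, 0 ≤ lam ∧ lam ≤ 1 ∧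
      ∀ Γ : X → ℝ, (∀ x, 0 ≤ Γ x ∧ Γ x ≤ 1) →
        max (∑' x, P x * (if Real.exp γ * P x < Q x then 1
              else if Q x < Real.exp γ * P x then 0 else lam))
            (∑' x, Q x * (1 - (if Real.exp γ * P x < Q x then 1
              else if Q x < Real.exp γ * P x then 0 else lam))) ≤
        max (∑' x, P x * Γ x) (∑' x, Q x * (1 - Γ x)) := by
  obtain ⟨t, htpos, hfE, hgE⟩ :=
    np_exists P Q hP_nonneg hQ_nonneg hP_sum hQ_sum hP_one hQ_one
  have sA : Summable (fun x => if t * P x < Q x then P x else 0) :=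
    np_summable_ite hP_sum hP_nonneg (fun x => t * P x < Q x)
  have sB : Summable (fun x => if t * P x ≤ Q x then P x else 0) :=
    np_summable_ite hP_sum hP_nonneg (fun x => t * P x ≤ Q x)
  have sC : Summable (fun x => if Q x < t * P x then Q x else 0) :=
    np_summable_ite hQ_sum hQ_nonneg (fun x => Q x < t * P x)
  have sD : Summable (fun x => if Q x ≤ t * P x then Q x else 0) :=
    np_summable_ite hQ_sum hQ_nonneg (fun x => Q x ≤ t * P x)
  set a : ℝ := npD P Q t - npA P Q t with ha
  set b : ℝ := npB P Q t - npC P Q t with hb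
  have ha0 : 0 ≤ a := by rw [ha]; linarith
  have hb0 : 0 ≤ b := by rw [hb]; linarith
  set lam : ℝ := if a + b = 0 then 0 else a / (a + b) with hlamdef
  have hlam0 : 0 ≤ lam := by
    rw [hlamdef]
    by_cases h : a + b = 0
    · simp [h]
    · simp only [h, if_neg, if_false]
      have : 0 < a + b := lt_of_le_of_ne (by linarith) (Ne.symm h)
      positivity
  have hlam1 : lam ≤ 1 := by
    rw [hlamdef]
    by_cases h : a + b = 0
    · simp [h]
    · simp only [h, if_neg, if_false]
      have hpos : 0 < a + b := lt_of_le_of_ne (by linarith) (Ne.symm h)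
      rw [div_le_one hpos]; linarith
  have hkey : (1 - lam) * a = lam * b := by
    rw [hlamdef]
    by_cases h : a + b = 0
    · have ha' : a = 0 := by linarith
      have hb' : b = 0 := by linarith
      simp [h, ha', hb']
    · have hpos : 0 < a + b := lt_of_le_of_ne (by linarith) (Ne.symm h)
      simp only [h, if_neg, if_false]
      field_simp
      ring
  have hab : (1 - lam) * npA P Q t + lam * npB P Q t
      = (1 - lam) * npD P Q t + lam * npC P Q t := by
    have h2 := hkey
    rw [ha, hb, mul_sub, mul_sub] at h2
    linarith
  refine ⟨Real.log t, lam, hlam0, hlam1, ?_⟩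
  intro Γ hΓ
  simp only [Real.exp_log htpos]
  -- the threshold test value bounds
  have hg0 : ∀ x, 0 ≤ (if t * P x < Q x then (1:ℝ) else if Q x < t * P x then 0 else lam) := by
    intro x
    rcases lt_trichotomy (t * P x) (Q x) with h | h | h
    · rw [if_pos h]; norm_num
    · rw [if_neg (by rw [h]; exact lt_irrefl _), if_neg (by rw [h]; exact lt_irrefl _)]
      exact hlam0
    · rw [if_neg (not_lt.2 h.le), if_pos h]
  have hg1 : ∀ x, (if t * P x < Q x then (1:ℝ) else if Q x < t * P x then 0 else lam) ≤ 1 := by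
    intro x
    rcases lt_trichotomy (t * P x) (Q x) with h | h | h
    · rw [if_pos h]
    · rw [if_neg (by rw [h]; exact lt_irrefl _), if_neg (by rw [h]; exact lt_irrefl _)]
      exact hlam1
    · rw [if_neg (not_lt.2 h.le), if_pos h]; norm_num
  -- expansion of the two error sums of the threshold test
  have e1 : ∀ x : X, P x * (if t * P x < Q x then (1:ℝ) else if Q x < t * P x then 0 else lam)
      = (1 - lam) * (if t * P x < Q x then P x else 0)
        + lam * (if t * P x ≤ Q x then P x else 0) := by
    intro x
    rcases lt_trichotomy (t * P x) (Q x) with h | h | h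
    · rw [if_pos h, if_pos h, if_pos h.le]; ring
    · rw [if_neg (by rw [h]; exact lt_irrefl _), if_neg (by rw [h]; exact lt_irrefl _),
        if_neg (by rw [h]; exact lt_irrefl _), if_pos h.le]
      ring
    · rw [if_neg (not_lt.2 h.le), if_pos h, if_neg (not_lt.2 h.le), if_neg (not_le.2 h)]
      ring
  have e2 : ∀ x : X,
      Q x * (1 - (if t * P x < Q x then (1:ℝ) else if Q x < t * P x then 0 else lam))
      = (1 - lam) * (if Q x ≤ t * P x then Q x else 0)
        + lam * (if Q x < t * P x then Q x else 0) := by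
    intro x
    rcases lt_trichotomy (t * P x) (Q x) with h | h | h
    · rw [if_pos h, if_neg (not_le.2 h), if_neg (not_lt.2 h.le)]; ring
    · rw [if_neg (by rw [h]; exact lt_irrefl _), if_neg (by rw [h]; exact lt_irrefl _),
        if_pos h.ge, if_neg (by rw [h]; exact lt_irrefl _)]
      ring
    · rw [if_neg (not_lt.2 h.le), if_pos h, if_pos h.le, if_pos h]; ring
  have hsum1 : (∑' x, P x * (if t * P x < Q x then (1:ℝ) else if Q x < t * P x then 0 else lam))
      = (1 - lam) * npA P Q t + lam * npB P Q t := by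
    rw [tsum_congr e1, Summable.tsum_add (sA.mul_left _) (sB.mul_left _), tsum_mul_left, tsum_mul_left]
    rfl
  have hsum2 : (∑' x, Q x * (1 - (if t * P x < Q x then (1:ℝ)
        else if Q x < t * P x then 0 else lam)))
      = (1 - lam) * npD P Q t + lam * npC P Q t := by
    rw [tsum_congr e2, Summable.tsum_add (sD.mul_left _) (sC.mul_left _), tsum_mul_left, tsum_mul_left]
    rfl
  set v : ℝ := (1 - lam) * npA P Q t + lam * npB P Q t with hv
  rw [hsum1, hsum2, ← hab, max_self]
  -- summability of the four test sums
  have sPΓ : Summable (fun x => P x * Γ x) :=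
    hP_sum.of_nonneg_of_le (fun x => mul_nonneg (hP_nonneg x) (hΓ x).1)
      (fun x => mul_le_of_le_one_right (hP_nonneg x) (hΓ x).2)
  have sQΓ : Summable (fun x => Q x * (1 - Γ x)) :=
    hQ_sum.of_nonneg_of_le (fun x => mul_nonneg (hQ_nonneg x) (by linarith [(hΓ x).2]))
      (fun x => mul_le_of_le_one_right (hQ_nonneg x) (by linarith [(hΓ x).1]))
  have sPg : Summable (fun x =>
      P x * (if t * P x < Q x then (1:ℝ) else if Q x < t * P x then 0 else lam)) :=
    hP_sum.of_nonneg_of_le (fun x => mul_nonneg (hP_nonneg x) (hg0 x))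
      (fun x => mul_le_of_le_one_right (hP_nonneg x) (hg1 x))
  have sQg : Summable (fun x =>
      Q x * (1 - (if t * P x < Q x then (1:ℝ) else if Q x < t * P x then 0 else lam))) :=
    hQ_sum.of_nonneg_of_le (fun x => mul_nonneg (hQ_nonneg x) (by linarith [hg1 x]))
      (fun x => mul_le_of_le_one_right (hQ_nonneg x) (by linarith [hg0 x]))
  -- pointwise Neyman–Pearson inequality
  have hptw : ∀ x : X,
      Q x * (1 - (if t * P x < Q x then (1:ℝ) else if Q x < t * P x then 0 else lam))
        + t * (P x * (if t * P x < Q x then (1:ℝ) else if Q x < t * P x then 0 else lam))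
      ≤ Q x * (1 - Γ x) + t * (P x * Γ x) := by
    intro x
    obtain ⟨hΓ0, hΓ1⟩ := hΓ x
    rcases lt_trichotomy (t * P x) (Q x) with h | h | h
    · rw [if_pos h]
      nlinarith [mul_nonneg (sub_nonneg.2 hΓ1) (sub_nonneg.2 h.le)]
    · rw [if_neg (show ¬ t * P x < Q x by rw [h]; exact lt_irrefl _),
        if_neg (show ¬ Q x < t * P x by rw [← h]; exact lt_irrefl _)]
      nlinarith [h]
    · rw [if_neg (not_lt.2 h.le), if_pos h]
      nlinarith [mul_nonneg hΓ0 (sub_nonneg.2 h.le)]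
  have hineq : (∑' x, Q x * (1 - (if t * P x < Q x then (1:ℝ)
        else if Q x < t * P x then 0 else lam)))
        + t * (∑' x, P x * (if t * P x < Q x then (1:ℝ)
          else if Q x < t * P x then 0 else lam))
      ≤ (∑' x, Q x * (1 - Γ x)) + t * (∑' x, P x * Γ x) := by
    have h1 := Summable.tsum_le_tsum hptw (sQg.add (sPg.mul_left t)) (sQΓ.add (sPΓ.mul_left t))
    rwa [Summable.tsum_add sQg (sPg.mul_left t), Summable.tsum_add sQΓ (sPΓ.mul_left t),
      tsum_mul_left, tsum_mul_left] at h1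
  rw [hsum1, hsum2, ← hab] at hineq
  have h1 : (∑' x, P x * Γ x) ≤ max (∑' x, P x * Γ x) (∑' x, Q x * (1 - Γ x)) :=
    le_max_left _ _
  have h2 : (∑' x, Q x * (1 - Γ x)) ≤ max (∑' x, P x * Γ x) (∑' x, Q x * (1 - Γ x)) :=
    le_max_right _ _
  nlinarith [hineq, h1, h2, htpos]
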